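/- arXiv:2304.09082 — 3 statements merged into one kernel-verified Lean document; each statement's English description precedes it below -/
import Mathlib

section
/- Let (P, ≤) be a finite partially ordered set, f : P → [0,∞), and let V(f) := { y ∈ P : there exists x ∈ P with x ≤ y and f(x) < f(y) } be the set of points where f violates antitonicity. Suppose V(f) is nonempty and let y₀ be a minimal element of V(f). Let g be the greatest antitone function on the subposet U_{y₀} = {x ∈ P : y₀ ≤ x} satisfying g(x) ≤ f(x) for all x ∈ U_{y₀}. Then the residual f′ := f − 1_{U_{y₀}}·g is nonnegative, f′(y₀) = 0, and V(f′) ⊆ V(f) \ {y₀}; in particular, #V(f′) < #V(f). -/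
/-!
On `U_{y₀}`, the interval minimum `x ↦ min {f z | y₀ ≤ z ≤ x}` is an admissible antitone
minorant of `f`, and it agrees with `f` at every `y ∈ U_{y₀}` where `f` is minimal on `[y₀, y]`,
in particular at `y₀` and at every non-violation of `f` in `U_{y₀}`. Being greatest, `g` is squeezed to `f` there, so the residual vanishes at those points.
Outside the upper set `U_{y₀}` the residual equals `f`, so it creates no new violation.
-/

/-- The principal upper set `U_y = {x | y ≤ x}`. -/
def upSet {P : Type*} [PartialOrder P] (y : P) : Set P := {x | y ≤ x}

/-- The set of points where `f` violates antitonicity. -/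
def violations {P : Type*} [PartialOrder P] (f : P → ℝ) : Set P :=
  {y | ∃ x, x ≤ y ∧ f x < f y}

section

variable {P : Type*} [PartialOrder P]

lemma isUpperSet_upSet (y : P) : IsUpperSet (upSet y) :=
  fun _ _ hab ha => le_trans ha hab

lemma notMem_violations_of_forall_le {f : P → ℝ} {y : P} (hy : ∀ x, f y ≤ f x) :
    y ∉ violations f :=
  fun ⟨x, _, hlt⟩ => (hy x).not_gt hlt

noncomputable def intervalInf (f : P → ℝ) (a x : P) : ℝ :=
  ⨅ z : Set.Icc a x, f z

variable {f : P → ℝ} {a x y : P}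

lemma intervalInf_le (hf : ∀ x, 0 ≤ f x) {z : P} (hz : z ∈ Set.Icc a x) :
    intervalInf f a x ≤ f z :=
  ciInf_le ⟨0, Set.forall_mem_range.2 fun w : Set.Icc a x => hf w⟩ ⟨z, hz⟩

lemma le_intervalInf {c : ℝ} (hax : a ≤ x) (hc : ∀ z ∈ Set.Icc a x, c ≤ f z) :
    c ≤ intervalInf f a x :=
  have : Nonempty (Set.Icc a x) := ⟨⟨a, le_rfl, hax⟩⟩
  le_ciInf fun z => hc z z.2

lemma antitoneOn_intervalInf (hf : ∀ x, 0 ≤ f x) :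
    AntitoneOn (intervalInf f a) (upSet a) :=
  fun _ hx _ _ hxz => le_intervalInf hx fun _ hw => intervalInf_le hf ⟨hw.1, hw.2.trans hxz⟩

lemma le_of_isGreatestAntitoneMinorant {g : P → ℝ} (hf : ∀ x, 0 ≤ f x)
    (hgmax : ∀ h : P → ℝ, AntitoneOn h (upSet a) → (∀ x ∈ upSet a, 0 ≤ h x) →
      (∀ x ∈ upSet a, h x ≤ f x) → ∀ x ∈ upSet a, h x ≤ g x)
    (hay : a ≤ y) (hmin : ∀ z ∈ Set.Icc a y, f y ≤ f z) : f y ≤ g y := by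
  have hminorant := hgmax (intervalInf f a) (antitoneOn_intervalInf hf)
    (fun x hx => le_intervalInf hx fun z _ => hf z)
    (fun x hx => intervalInf_le hf ⟨hx, le_rfl⟩)
  exact (le_intervalInf hay hmin).trans (hminorant y hay)

lemma violations_sub_indicator_subset {s : Set P} (hs : IsUpperSet s) {g : P → ℝ}
    (hnonneg : ∀ x, 0 ≤ f x - s.indicator g x)
    (hfg : ∀ y ∈ s, y ∉ violations f → g y = f y) :
    violations (fun x => f x - s.indicator g x) ⊆ violations f := by
  rintro y ⟨x, hxy, hlt⟩
  by_cases hy : y ∈ s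
  · by_contra hyf
    refine notMem_violations_of_forall_le (f := fun x => f x - s.indicator g x)
      (fun z => ?_) ⟨x, hxy, hlt⟩
    simpa [Set.indicator_of_mem hy, hfg y hy hyf] using hnonneg z
  · have hx : x ∉ s := fun hx => hy (hs hxy hx)
    simp only [Set.indicator_of_notMem hx, Set.indicator_of_notMem hy, sub_zero] at hlt
    exact ⟨x, hxy, hlt⟩

end

theorem stmt_6_general {P : Type*} [PartialOrder P] [Fintype P]
    (f : P → ℝ) (hf : ∀ x, 0 ≤ f x)
    (y₀ : P) (hy₀ : y₀ ∈ violations f)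
    (g : P → ℝ)
    (hgf : ∀ x ∈ upSet y₀, g x ≤ f x)
    (hgmax : ∀ h : P → ℝ,
      (∀ x ∈ upSet y₀, ∀ z ∈ upSet y₀, x ≤ z → h z ≤ h x) →
      (∀ x ∈ upSet y₀, 0 ≤ h x) → (∀ x ∈ upSet y₀, h x ≤ f x) →
      ∀ x ∈ upSet y₀, h x ≤ g x)
    (f' : P → ℝ) (hf' : ∀ x, f' x = f x - (upSet y₀).indicator g x) :
    (∀ x, 0 ≤ f' x) ∧ f' y₀ = 0 ∧
    violations f' ⊆ violations f \ {y₀} ∧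
    (violations f').ncard < (violations f).ncard := by
  obtain rfl : f' = fun x => f x - (upSet y₀).indicator g x := funext hf'
  have hnonneg : ∀ x, 0 ≤ f x - (upSet y₀).indicator g x := by
    intro x
    by_cases hx : x ∈ upSet y₀
    · simpa [Set.indicator_of_mem hx] using hgf x hx
    · simpa [Set.indicator_of_notMem hx] using hf x
  have hfg : ∀ y ∈ upSet y₀, y ∉ violations f → g y = f y := fun y hy hyf =>
    (hgf y hy).antisymm <| le_of_isGreatestAntitoneMinorant hf hgmax hy
      fun z hz => not_lt.mp fun hlt => hyf ⟨z, hz.2, hlt⟩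
  have hzero : f y₀ - (upSet y₀).indicator g y₀ = 0 := by
    have hgy₀ : g y₀ = f y₀ := (hgf y₀ le_rfl).antisymm <|
      le_of_isGreatestAntitoneMinorant hf hgmax le_rfl
        fun z hz => (le_antisymm hz.2 hz.1 ▸ le_rfl)
    simp [Set.indicator_of_mem (show y₀ ∈ upSet y₀ from le_rfl), hgy₀]
  have hsub : violations (fun x => f x - (upSet y₀).indicator g x) ⊆ violations f \ {y₀} :=
    fun y hy => ⟨violations_sub_indicator_subset (isUpperSet_upSet y₀) hnonneg hfg hy,
      fun hyy₀ => notMem_violations_of_forall_le (fun x => hzero ▸ hnonneg x) (hyy₀ ▸ hy)⟩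
  exact ⟨hnonneg, hzero, hsub,
    (Set.ncard_le_ncard hsub).trans_lt (Set.ncard_sdiff_singleton_lt_of_mem hy₀)⟩

/-- subtracting the greatest antitone minorant of `f` on the
principal upper set of a minimal violation `y₀` yields a nonnegative residual
vanishing at `y₀` with strictly fewer violations of antitonicity. -/
theorem stmt_6 {P : Type*} [PartialOrder P] [Fintype P]
    (f : P → ℝ) (hf : ∀ x, 0 ≤ f x)
    (y₀ : P) (hy₀ : y₀ ∈ violations f)
    (hy₀min : ∀ y ∈ violations f, y ≤ y₀ → y = y₀)
    (g : P → ℝ)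
    (hgA : ∀ x ∈ upSet y₀, ∀ z ∈ upSet y₀, x ≤ z → g z ≤ g x)
    (hg0 : ∀ x ∈ upSet y₀, 0 ≤ g x)
    (hgf : ∀ x ∈ upSet y₀, g x ≤ f x)
    (hgmax : ∀ h : P → ℝ,
      (∀ x ∈ upSet y₀, ∀ z ∈ upSet y₀, x ≤ z → h z ≤ h x) →
      (∀ x ∈ upSet y₀, 0 ≤ h x) → (∀ x ∈ upSet y₀, h x ≤ f x) →
      ∀ x ∈ upSet y₀, h x ≤ g x)
    (f' : P → ℝ) (hf' : ∀ x, f' x = f x - (upSet y₀).indicator g x) :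
    (∀ x, 0 ≤ f' x) ∧ f' y₀ = 0 ∧
    violations f' ⊆ violations f \ {y₀} ∧
    (violations f').ncard < (violations f).ncard :=
  stmt_6_general f hf y₀ hy₀ g hgf hgmax f' hf'
end

section
/- Let X be a topological space with only finitely many open sets, let 𝒱 be a finite irredundant open cover of X, and let 𝒰 be a finite open cover of X that refines 𝒱. Then the cardinality of 𝒱 is at most the cardinality of 𝒰: #𝒱 ≤ #𝒰. -/
/-- if a space has finitely many open sets, a finite open cover
`U` refining a finite irredundant open cover `V` has at least as many members:
`#V ≤ #U`. -/
theorem stmt_14 {X : Type*} [TopologicalSpace X]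
    (hfin : {s : Set X | IsOpen s}.Finite)
    (U V : Set (Set X)) (hUfin : U.Finite) (hVfin : V.Finite)
    (hUopen : ∀ u ∈ U, IsOpen u) (hVopen : ∀ v ∈ V, IsOpen v)
    (hUcov : ⋃₀ U = Set.univ) (hVcov : ⋃₀ V = Set.univ)
    (href : ∀ u ∈ U, ∃ v ∈ V, u ⊆ v)
    (hirr : ∀ v ∈ V, ¬ ∃ W ⊆ V, v ∉ W ∧ v ⊆ ⋃₀ W) :
    V.ncard ≤ U.ncard := by
  classical
  -- a choice of refinement target for each u ∈ U
  choose g hgV hgsub using href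
  -- for each v ∈ V, a point of v in no other member of V
  have hpriv : ∀ v ∈ V, ∃ x, x ∈ v ∧ ∀ w ∈ V, w ≠ v → x ∉ w := by
    intro v hv
    have h := hirr v hv
    by_contra hcon
    push_neg at hcon
    exact h ⟨V \ {v}, Set.diff_subset, by simp, fun x hx => by
      obtain ⟨w, hw, hne, hxw⟩ := hcon x hx
      exact ⟨w, ⟨hw, by simpa using hne⟩, hxw⟩⟩
  choose x hxv hxonly using hpriv
  -- for each v ∈ V, a member of U containing the private point
  have hcovU : ∀ v (hv : v ∈ V), ∃ u ∈ U, x v hv ∈ u := by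
    intro v hv
    have : x v hv ∈ ⋃₀ U := by rw [hUcov]; trivial
    simpa using this
  choose u huU hxu using hcovU
  -- key: g (u v hv) = v
  have hkey : ∀ v (hv : v ∈ V), g (u v hv) (huU v hv) = v := by
    intro v hv
    by_contra hne
    exact hxonly v hv _ (hgV _ (huU v hv)) hne (hgsub _ (huU v hv) (hxu v hv))
  -- build injection V → U
  refine Set.ncard_le_ncard_of_injOn (s := V) (t := U)
    (fun v => if hv : v ∈ V then u v hv else ∅)
    (fun v hv => by simp [hv, huU]) (fun v1 h1 v2 h2 heq => ?_) hUfin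
  simp only [dif_pos h1, dif_pos h2] at heq
  rw [← hkey v1 h1, ← hkey v2 h2]
  exact congr_heq (by rw [heq]) (Subsingleton.helim (by rw [heq]) _ _)
end

section
/- Every function f : P → [0,∞) from a finite partially ordered set (P, ≤) to the nonnegative real numbers admits a minimally refined monotonic decomposition: there exists a monotonic decomposition D of f such that every monotonic decomposition of f that is refined by D also refines D. -/
/-- A monotonic decomposition of `f : P → [0,∞)`: a finite list of pairs
`(y_k, g_k)` with each `g_k` antitone and nonnegative, such that
`f x = Σ_k 1_{U_{y_k}}(x) · g_k x` for all `x`. -/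
def IsMonoDecomp {P : Type*} [PartialOrder P] (f : P → ℝ)
    (D : List (P × (P → ℝ))) : Prop :=
  (∀ d ∈ D, Antitone d.2 ∧ ∀ x, 0 ≤ d.2 x) ∧
  ∀ x, f x = (D.map fun d => (upSet d.1).indicator d.2 x).sum

/-- `D` refines `E`: for every term `(z, h)` of `D` there is a term `(y, g)` of
`E` with `U_z ⊆ U_y` and `h ≤ g` on `U_z`. -/
def Refines {P : Type*} [PartialOrder P] (D E : List (P × (P → ℝ))) : Prop :=
  ∀ d ∈ D, ∃ e ∈ E, upSet d.1 ⊆ upSet e.1 ∧ ∀ x ∈ upSet d.1, d.2 x ≤ e.2 x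

/-- A monotonic decomposition is irredundant if each of its antitone functions
is nonzero at some point. -/
def Irredundant {P : Type*} [PartialOrder P] (D : List (P × (P → ℝ))) : Prop :=
  ∀ d ∈ D, ∃ x, d.2 x ≠ 0

namespace Stmt17

open scoped Classical

variable {P : Type*} [PartialOrder P] [Fintype P]

/-- The compact set of "merged" monotonic decompositions: `H y` is the total
antitone function based at `y`; off the upper set of `y` it is pinned to the
constant `B` (an upper bound for `f`) to make the set compact. -/
def Kset (f : P → ℝ) (B : ℝ) : Set (P → P → ℝ) :=
  {H | (∀ y, Antitone (H y)) ∧ (∀ y x, 0 ≤ H y x) ∧ (∀ y x, ¬ y ≤ x → H y x = B) ∧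
    ∀ x, ∑ y, (upSet y).indicator (H y) x = f x}

/-- Refinement relation on merged decompositions. -/
def rel : (P → P → ℝ) → (P → P → ℝ) → Prop :=
  fun H H' => ∀ y, ∃ y', y' ≤ y ∧ ∀ x, y ≤ x → H y x ≤ H' y' x

lemma rel_refl (H : P → P → ℝ) : rel H H := fun y => ⟨y, le_rfl, fun _ _ => le_rfl⟩

lemma rel_trans {H₁ H₂ H₃ : P → P → ℝ} (h12 : rel H₁ H₂) (h23 : rel H₂ H₃) :
    rel H₁ H₃ := by
  intro y
  obtain ⟨y', hy', h1⟩ := h12 y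
  obtain ⟨y'', hy'', h2⟩ := h23 y'
  exact ⟨y'', hy''.trans hy', fun x hx => (h1 x hx).trans (h2 x (hy'.trans hx))⟩

lemma mem_upSet {y x : P} : x ∈ upSet y ↔ y ≤ x := Iff.rfl

lemma indicator_upSet {y x : P} (h : y ≤ x) (g : P → ℝ) :
    (upSet y).indicator g x = g x := Set.indicator_of_mem h g

lemma indicator_upSet_neg {y x : P} (h : ¬ y ≤ x) (g : P → ℝ) :
    (upSet y).indicator g x = 0 := Set.indicator_of_notMem h g

lemma le_f_of_mem_Kset {f : P → ℝ} {B : ℝ} {H : P → P → ℝ} (hH : H ∈ Kset f B)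
    {y x : P} (hyx : y ≤ x) : H y x ≤ f x := by
  obtain ⟨_, hpos, _, hsum⟩ := hH
  calc H y x = (upSet y).indicator (H y) x := (Set.indicator_of_mem hyx _).symm
    _ ≤ ∑ z, (upSet z).indicator (H z) x :=
        Finset.single_le_sum
          (f := fun z => (upSet z).indicator (H z) x)
          (fun z _ => Set.indicator_nonneg (fun t _ => hpos z t) x) (Finset.mem_univ y)
    _ = f x := hsum x

lemma le_B_of_mem_Kset {f : P → ℝ} {B : ℝ} (hB : ∀ x, f x ≤ B) {H : P → P → ℝ}
    (hH : H ∈ Kset f B) (y x : P) : H y x ≤ B := by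
  by_cases hyx : y ≤ x
  · exact (le_f_of_mem_Kset hH hyx).trans (hB x)
  · exact le_of_eq (hH.2.2.1 y x hyx)

lemma continuous_eval (y x : P) : Continuous fun H : P → P → ℝ => H y x :=
  (continuous_apply x).comp (continuous_apply y)

lemma isClosed_Kset (f : P → ℝ) (B : ℝ) : IsClosed (Kset f B) := by
  have h1 : IsClosed {H : P → P → ℝ | ∀ y, Antitone (H y)} := by
    have : {H : P → P → ℝ | ∀ y, Antitone (H y)} =
        ⋂ (y : P) (a : P) (b : P) (_ : a ≤ b), {H : P → P → ℝ | H y b ≤ H y a} := by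
      ext H
      simp only [Set.mem_setOf_eq, Set.mem_iInter]
      exact ⟨fun h y a b hab => h y hab, fun h y a b hab => h y a b hab⟩
    rw [this]
    exact isClosed_iInter fun y => isClosed_iInter fun a => isClosed_iInter fun b =>
      isClosed_iInter fun _ => isClosed_le (continuous_eval y b) (continuous_eval y a)
  have h2 : IsClosed {H : P → P → ℝ | ∀ y x, 0 ≤ H y x} := by
    have : {H : P → P → ℝ | ∀ y x, 0 ≤ H y x} =
        ⋂ (y : P) (x : P), {H : P → P → ℝ | 0 ≤ H y x} := by
      ext H; simp [Set.mem_iInter]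
    rw [this]
    exact isClosed_iInter fun y => isClosed_iInter fun x =>
      isClosed_le continuous_const (continuous_eval y x)
  have h3 : IsClosed {H : P → P → ℝ | ∀ y x, ¬ y ≤ x → H y x = B} := by
    have : {H : P → P → ℝ | ∀ y x, ¬ y ≤ x → H y x = B} =
        ⋂ (y : P) (x : P) (_ : ¬ y ≤ x), {H : P → P → ℝ | H y x = B} := by
      ext H; simp only [Set.mem_setOf_eq, Set.mem_iInter]
    rw [this]
    exact isClosed_iInter fun y => isClosed_iInter fun x => isClosed_iInter fun _ =>
      isClosed_eq (continuous_eval y x) continuous_const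
  have h4 : IsClosed {H : P → P → ℝ | ∀ x, ∑ y, (upSet y).indicator (H y) x = f x} := by
    have : {H : P → P → ℝ | ∀ x, ∑ y, (upSet y).indicator (H y) x = f x} =
        ⋂ (x : P), {H : P → P → ℝ | ∑ y, (upSet y).indicator (H y) x = f x} := by
      ext H; simp only [Set.mem_setOf_eq, Set.mem_iInter]
    rw [this]
    refine isClosed_iInter fun x => isClosed_eq ?_ continuous_const
    refine continuous_finset_sum _ fun y _ => ?_
    by_cases h : x ∈ upSet y
    · simpa only [Set.indicator_of_mem h] using continuous_eval y x
    · simpa only [Set.indicator_of_notMem h] using (continuous_const :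
        Continuous fun _ : P → P → ℝ => (0 : ℝ))
  have : Kset f B = {H : P → P → ℝ | ∀ y, Antitone (H y)} ∩
      ({H | ∀ y x, 0 ≤ H y x} ∩ ({H | ∀ y x, ¬ y ≤ x → H y x = B} ∩
      {H | ∀ x, ∑ y, (upSet y).indicator (H y) x = f x})) := by
    ext H
    simp only [Kset, Set.mem_setOf_eq, Set.mem_inter_iff]
  rw [this]
  exact h1.inter (h2.inter (h3.inter h4))

lemma isCompact_Kset (f : P → ℝ) {B : ℝ} (hf : ∀ x, 0 ≤ f x) (hB : ∀ x, f x ≤ B)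
    (hB0 : (0 : ℝ) ≤ B) : IsCompact (Kset f B) := by
  have hbox : IsCompact ((Set.univ : Set P).pi fun _ : P =>
      (Set.univ : Set P).pi fun _ : P => Set.Icc (0 : ℝ) B) :=
    isCompact_univ_pi fun _ => isCompact_univ_pi fun _ => isCompact_Icc
  refine hbox.of_isClosed_subset (isClosed_Kset f B) ?_
  intro H hH
  rw [Set.mem_univ_pi]
  intro y
  rw [Set.mem_univ_pi]
  intro x
  exact ⟨hH.2.1 y x, le_B_of_mem_Kset hB hH y x⟩

/-- The "delta" decomposition: mass `f y` concentrated at `y`. -/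
noncomputable def delta (f : P → ℝ) (B : ℝ) : P → P → ℝ := fun y x =>
  if x = y then f y else if y ≤ x then 0 else B

lemma delta_mem (f : P → ℝ) {B : ℝ} (hf : ∀ x, 0 ≤ f x) (hB0 : (0 : ℝ) ≤ B)
    (hB : ∀ x, f x ≤ B) : delta f B ∈ Kset f B := by
  have hnn : ∀ y x, 0 ≤ delta f B y x := by
    intro y x
    unfold delta
    split_ifs
    · exact hf y
    · exact le_rfl
    · exact hB0
  have hle : ∀ y x, delta f B y x ≤ B := by
    intro y x
    unfold delta
    split_ifs
    · exact hB y
    · exact hB0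
    · exact le_rfl
  refine ⟨?_, hnn, ?_, ?_⟩
  · intro y a b hab
    show delta f B y b ≤ delta f B y a
    unfold delta
    by_cases hby : b = y
    · subst hby
      by_cases hay : a = b
      · subst hay; simp
      · have : ¬ b ≤ a := fun h => hay (le_antisymm hab h)
        rw [if_pos rfl, if_neg hay, if_neg this]
        exact hB _
    · rw [if_neg hby]
      by_cases hyb : y ≤ b
      · rw [if_pos hyb]
        exact hnn y a
      · have hya : ¬ y ≤ a := fun h => hyb (h.trans hab)
        have hay : a ≠ y := fun h => hya (le_of_eq h.symm)
        rw [if_neg hyb, if_neg hay, if_neg hya]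
  · intro y x hxy
    have hxy' : x ≠ y := fun h => hxy (le_of_eq h.symm)
    unfold delta
    rw [if_neg hxy', if_neg hxy]
  · intro x
    have key : ∀ y : P, (upSet y).indicator (delta f B y) x = if y = x then f x else 0 := by
      intro y
      by_cases hyx : y ≤ x
      · rw [indicator_upSet hyx]
        unfold delta
        by_cases hxy : x = y
        · subst hxy; simp
        · rw [if_neg hxy, if_pos hyx, if_neg (Ne.symm hxy)]
      · have hne : y ≠ x := fun h => hyx (le_of_eq h)
        rw [indicator_upSet_neg hyx, if_neg hne]
    rw [Finset.sum_congr rfl fun y _ => key y]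
    simp

lemma isClosed_ub (f : P → ℝ) (B : ℝ) (M : P → P → ℝ) :
    IsClosed {A | A ∈ Kset f B ∧ rel M A} := by
  have hsplit : {A | A ∈ Kset f B ∧ rel M A} = Kset f B ∩ {A | rel M A} := rfl
  rw [hsplit]
  refine (isClosed_Kset f B).inter ?_
  have : {A : P → P → ℝ | rel M A} =
      ⋂ (y : P), ⋃ (y' : P) (_ : y' ≤ y), ⋂ (x : P) (_ : y ≤ x),
        {A : P → P → ℝ | M y x ≤ A y' x} := by
    ext A
    simp only [rel, Set.mem_setOf_eq, Set.mem_iInter, Set.mem_iUnion]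
    constructor
    · intro h y
      obtain ⟨y', hy', hle⟩ := h y
      exact ⟨y', hy', fun x hx => hle x hx⟩
    · intro h y
      obtain ⟨y', hy', hle⟩ := h y
      exact ⟨y', hy', fun x hx => hle x hx⟩
  rw [this]
  refine isClosed_iInter fun y => ?_
  refine isClosed_iUnion_of_finite fun y' => isClosed_iUnion_of_finite fun _ => ?_
  exact isClosed_iInter fun x => isClosed_iInter fun _ =>
    isClosed_le continuous_const (continuous_eval y' x)

/-- Existence of a maximal merged decomposition, by compactness and Zorn. -/
lemma exists_maximal (f : P → ℝ) {B : ℝ} (hf : ∀ x, 0 ≤ f x) (hB : ∀ x, f x ≤ B)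
    (hB0 : (0 : ℝ) ≤ B) :
    ∃ H ∈ Kset f B, ∀ A ∈ Kset f B, rel H A → rel A H := by
  have hKc : IsCompact (Kset f B) := isCompact_Kset f hf hB hB0
  let α := {H : P → P → ℝ // H ∈ Kset f B}
  have hchain : ∀ c : Set α, IsChain (fun a b : α => rel a.1 b.1) c →
      ∃ ub : α, ∀ a ∈ c, rel a.1 ub.1 := by
    intro c hc
    rcases c.eq_empty_or_nonempty with rfl | ⟨M0, hM0⟩
    · exact ⟨⟨delta f B, delta_mem f hf hB0 hB⟩, by simp⟩
    · have hne : Nonempty c := ⟨⟨M0, hM0⟩⟩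
      set t : c → Set (P → P → ℝ) :=
        fun M => {A | A ∈ Kset f B ∧ rel M.1.1 A} with ht
      have htd : Directed (· ⊇ ·) t := by
        intro M M'
        rcases eq_or_ne (M : α) (M' : α) with h | h
        · refine ⟨M, le_refl _, ?_⟩
          simp only [ht, h]
          exact le_refl _
        · rcases hc M.2 M'.2 (fun hh => h (by exact hh)) with h' | h'
          · exact ⟨M', fun A hA => ⟨hA.1, rel_trans h' hA.2⟩, le_refl _⟩
          · exact ⟨M, le_refl _, fun A hA => ⟨hA.1, rel_trans h' hA.2⟩⟩
      have htn : ∀ M : c, (t M).Nonempty := fun M => ⟨M.1.1, M.1.2, rel_refl _⟩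
      have htc : ∀ M : c, IsCompact (t M) :=
        fun M => hKc.of_isClosed_subset (isClosed_ub f B M.1.1) fun A hA => hA.1
      have htcl : ∀ M : c, IsClosed (t M) := fun M => isClosed_ub f B M.1.1
      obtain ⟨A, hA⟩ :=
        IsCompact.nonempty_iInter_of_directed_nonempty_isCompact_isClosed t htd htn htc htcl
      have hA' : ∀ M : c, A ∈ t M := Set.mem_iInter.1 hA
      exact ⟨⟨A, (hA' ⟨M0, hM0⟩).1⟩, fun a ha => (hA' ⟨a, ha⟩).2⟩
  obtain ⟨m, hm⟩ := exists_maximal_of_chains_bounded hchain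
    (fun {a b c} hab hbc => rel_trans hab hbc)
  exact ⟨m.1, m.2, fun A hA hr => hm ⟨A, hA⟩ hr⟩

lemma sum_map_toList (g : P → ℝ) :
    ((Finset.univ.toList (α := P)).map g).sum = ∑ y, g y := by
  calc (Finset.univ.toList.map g).sum
      = ((↑(Finset.univ.toList.map g) : Multiset ℝ)).sum := (Multiset.sum_coe _).symm
    _ = (Multiset.map g ↑(Finset.univ.toList (α := P))).sum := by rw [Multiset.map_coe]
    _ = (Multiset.map g (Finset.univ.val (α := P))).sum := by rw [Finset.coe_toList]
    _ = ∑ y, g y := rfl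

/-- Regrouping a list decomposition by base point. -/
lemma regroup (E : List (P × (P → ℝ))) (x : P) :
    ∑ y, (if y ≤ x then (E.map fun d => if d.1 = y then d.2 x else 0).sum else 0)
      = (E.map fun d => (upSet d.1).indicator d.2 x).sum := by
  induction E with
  | nil => simp
  | cons d t ih =>
    have step : ∀ y : P,
        (if y ≤ x then ((d :: t).map fun e => if e.1 = y then e.2 x else 0).sum else 0)
          = (if y ≤ x then (if d.1 = y then d.2 x else 0) else 0)
            + (if y ≤ x then (t.map fun e => if e.1 = y then e.2 x else 0).sum else 0) := by
      intro y
      by_cases hy : y ≤ x <;> simp [hy]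
    rw [Finset.sum_congr rfl fun y _ => step y, Finset.sum_add_distrib, ih]
    have first : ∑ y, (if y ≤ x then (if d.1 = y then d.2 x else 0) else 0)
        = (upSet d.1).indicator d.2 x := by
      rw [Finset.sum_eq_single d.1]
      · by_cases h : d.1 ≤ x
        · rw [if_pos h, if_pos rfl, indicator_upSet h]
        · rw [if_neg h, indicator_upSet_neg h]
      · intro y _ hy
        by_cases h : y ≤ x
        · rw [if_pos h, if_neg (Ne.symm hy)]
        · rw [if_neg h]
      · intro h
        exact absurd (Finset.mem_univ _) h
    rw [first]
    simp

/-- Merge a list decomposition into an element of `Kset`. -/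
noncomputable def mergeE (B : ℝ) (E : List (P × (P → ℝ))) : P → P → ℝ := fun y x =>
  if y ≤ x then (E.map fun d => if d.1 = y then d.2 x else 0).sum else B

lemma mergeE_mem {f : P → ℝ} {B : ℝ} (hf : ∀ x, 0 ≤ f x) (hB : ∀ x, f x ≤ B)
    {E : List (P × (P → ℝ))} (hE : IsMonoDecomp f E) : mergeE B E ∈ Kset f B := by
  obtain ⟨hEterms, hEsum⟩ := hE
  have hterm_nonneg : ∀ (x : P), ∀ r ∈ E.map fun d => (upSet d.1).indicator d.2 x, 0 ≤ r := by
    intro x r hr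
    obtain ⟨d, hd, rfl⟩ := List.mem_map.1 hr
    exact Set.indicator_nonneg (fun t _ => (hEterms d hd).2 t) x
  have hgroup_nonneg : ∀ (y x : P),
      (0 : ℝ) ≤ (E.map fun d => if d.1 = y then d.2 x else 0).sum := by
    intro y x
    refine List.sum_nonneg ?_
    intro r hr
    obtain ⟨d, hd, rfl⟩ := List.mem_map.1 hr
    by_cases h : d.1 = y
    · rw [if_pos h]; exact (hEterms d hd).2 x
    · rw [if_neg h]
  have hgroup_le_f : ∀ (y x : P), y ≤ x →
      (E.map fun d => if d.1 = y then d.2 x else 0).sum ≤ f x := by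
    intro y x hyx
    rw [hEsum x]
    refine List.sum_le_sum ?_
    intro d hd
    by_cases h : d.1 = y
    · rw [if_pos h]
      have hx : d.1 ≤ x := h ▸ hyx
      rw [indicator_upSet hx]
    · rw [if_neg h]
      exact Set.indicator_nonneg (fun t _ => (hEterms d hd).2 t) x
  have hnn : ∀ y x, 0 ≤ mergeE B E y x := by
    intro y x
    unfold mergeE
    split_ifs with h
    · exact hgroup_nonneg y x
    · exact (hf x).trans (hB x)
  refine ⟨?_, hnn, ?_, ?_⟩
  · intro y a b hab
    show mergeE B E y b ≤ mergeE B E y a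
    unfold mergeE
    by_cases hya : y ≤ a
    · have hyb : y ≤ b := hya.trans hab
      rw [if_pos hya, if_pos hyb]
      refine List.sum_le_sum ?_
      intro d hd
      by_cases h : d.1 = y
      · rw [if_pos h, if_pos h]
        exact (hEterms d hd).1 hab
      · rw [if_neg h, if_neg h]
    · rw [if_neg hya]
      by_cases hyb : y ≤ b
      · rw [if_pos hyb]
        exact (hgroup_le_f y b hyb).trans (hB b)
      · rw [if_neg hyb]
  · intro y x h
    unfold mergeE
    rw [if_neg h]
  · intro x
    have key : ∀ y : P, (upSet y).indicator (mergeE B E y) x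
        = if y ≤ x then (E.map fun d => if d.1 = y then d.2 x else 0).sum else 0 := by
      intro y
      by_cases h : y ≤ x
      · rw [indicator_upSet h, if_pos h]
        unfold mergeE
        rw [if_pos h]
      · rw [indicator_upSet_neg h, if_neg h]
    rw [Finset.sum_congr rfl fun y _ => key y, regroup, ← hEsum x]

lemma single_le_group {E : List (P × (P → ℝ))}
    (hpos : ∀ d ∈ E, ∀ x, 0 ≤ d.2 x) {e : P × (P → ℝ)} (he : e ∈ E) (x : P) :
    e.2 x ≤ (E.map fun d => if d.1 = e.1 then d.2 x else 0).sum := by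
  have hmem : e.2 x ∈ E.map fun d => if d.1 = e.1 then d.2 x else 0 := by
    refine List.mem_map.2 ⟨e, he, ?_⟩
    rw [if_pos rfl]
  refine List.single_le_sum ?_ _ hmem
  intro r hr
  obtain ⟨d, hd, rfl⟩ := List.mem_map.1 hr
  by_cases h : d.1 = e.1
  · rw [if_pos h]; exact hpos d hd x
  · rw [if_neg h]

end Stmt17

/-- every nonnegative function on a finite poset admits a
minimally refined monotonic decomposition: a monotonic decomposition `D` such
that every monotonic decomposition of `f` refined by `D` also refines `D`. -/
theorem stmt_17 {P : Type*} [PartialOrder P] [Fintype P]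
    (f : P → ℝ) (hf : ∀ x, 0 ≤ f x) :
    ∃ D : List (P × (P → ℝ)), IsMonoDecomp f D ∧
      ∀ E : List (P × (P → ℝ)), IsMonoDecomp f E → Refines D E → Refines E D := by
  classical
  set B : ℝ := ∑ x, f x with hBdef
  have hB : ∀ x, f x ≤ B := fun x => Finset.single_le_sum (fun y _ => hf y) (Finset.mem_univ x)
  have hB0 : (0 : ℝ) ≤ B := Finset.sum_nonneg fun x _ => hf x
  obtain ⟨H, hHK, hmax⟩ := Stmt17.exists_maximal f hf hB hB0
  refine ⟨(Finset.univ.toList (α := P)).map fun y => (y, H y), ⟨?_, ?_⟩, ?_⟩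
  · intro d hd
    obtain ⟨y, hy, rfl⟩ := List.mem_map.1 hd
    exact ⟨hHK.1 y, fun x => hHK.2.1 y x⟩
  · intro x
    have hcomp : (((Finset.univ.toList (α := P)).map fun y => (y, H y)).map
          fun d => (upSet d.1).indicator d.2 x)
        = (Finset.univ.toList (α := P)).map fun y => (upSet y).indicator (H y) x := by
      rw [List.map_map]; rfl
    rw [hcomp, Stmt17.sum_map_toList]
    exact (hHK.2.2.2 x).symm
  · intro E hE hDE
    have hEK : Stmt17.mergeE B E ∈ Stmt17.Kset f B := Stmt17.mergeE_mem hf hB hE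
    have hrel1 : Stmt17.rel H (Stmt17.mergeE B E) := by
      intro y
      have hmem : (y, H y) ∈ (Finset.univ.toList (α := P)).map fun y => (y, H y) :=
        List.mem_map.2 ⟨y, Finset.mem_toList.2 (Finset.mem_univ y), rfl⟩
      obtain ⟨e, heE, hsub, hle⟩ := hDE _ hmem
      have he1y : e.1 ≤ y := hsub (show y ∈ upSet y from le_refl y)
      refine ⟨e.1, he1y, fun x hx => ?_⟩
      have h1 : H y x ≤ e.2 x := hle x hx
      have h2 : e.2 x ≤ Stmt17.mergeE B E e.1 x := by
        have hx' : e.1 ≤ x := he1y.trans hx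
        unfold Stmt17.mergeE
        rw [if_pos hx']
        exact Stmt17.single_le_group (fun d hd => (hE.1 d hd).2) heE x
      exact h1.trans h2
    have hrel2 : Stmt17.rel (Stmt17.mergeE B E) H := hmax _ hEK hrel1
    intro e heE
    obtain ⟨y', hy', hle⟩ := hrel2 e.1
    refine ⟨(y', H y'),
      List.mem_map.2 ⟨y', Finset.mem_toList.2 (Finset.mem_univ y'), rfl⟩, ?_, ?_⟩
    · intro x hx
      exact hy'.trans hx
    · intro x hx
      have h1 : e.2 x ≤ Stmt17.mergeE B E e.1 x := by
        unfold Stmt17.mergeE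
        rw [if_pos (show e.1 ≤ x from hx)]
        exact Stmt17.single_le_group (fun d hd => (hE.1 d hd).2) heE x
      exact h1.trans (hle x hx)
end
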